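/- Let (L, v) be a complete discretely valued skew field with uniformizer σ, f ∈ L[t] monic whose Newton polygon is a single edge with positive slope, M = L[t]/fL[t], and Λ an O-lattice in M. Then there exists k₀ ≥ 0 such that for all k ≥ k₀ one has tᵏΛ ⊇ σ⁻¹Λ. -/

import Mathlib

/-!
Let `m₀` be the class of `1` in `M`, `eᵢ = tⁱ m₀`, and `Γ n = ∑_{i<d} {a | n ≤ v a} • eᵢ`.
The single edge of positive slope forces `v f₀ < v fᵢ` for `i > 0`, so `f m₀ = 0` reads
`m₀ = t u` with `u ∈ Γ 1`. Hence `Γ n ⊆ t Γ n` for every `n`, and `eᵢ = t^(i+1) u` upgrades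
this to `Γ n ⊆ tᵈ Γ (n + 1)`. As `Λ` is commensurable with these lattices, `Λ ⊆ Γ n₁` and
`Γ n₂ ⊆ Λ`, so `σ⁻¹ Λ ⊆ Γ (n₁ - 1) ⊆ tᵏ Γ n₂ ⊆ tᵏ Λ` once `k ≥ d (n₂ - n₁ + 1)`.
-/

/-- The valuation of a coefficient, as an extended real number. -/
noncomputable def evv {L : Type*} (v : L → WithTop ℤ) (x : L) : EReal :=
  WithTop.recTopCoe ⊤ (fun n : ℤ => ((n : ℝ) : EReal)) (v x)

/-- The Newton polygon (lower convex hull function) of a polynomial. -/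
noncomputable def NP {L : Type*} [DivisionRing L] (v : L → WithTop ℤ)
    (f : Polynomial L) (x : ℝ) : EReal :=
  sSup {y : EReal | ∃ a b : ℝ,
    (∀ i ∈ f.support, ((a * i + b : ℝ) : EReal) ≤ evv v (f.coeff i)) ∧
    y = ((a * x + b : ℝ) : EReal)}

open Polynomial Pointwise Filter

section NewtonPolygon

lemma evv_lt_evv_iff {L : Type*} (v : L → WithTop ℤ) {x y : L} :
    evv v x < evv v y ↔ v x < v y := by
  unfold evv
  induction v x using WithTop.recTopCoe <;> induction v y using WithTop.recTopCoe <;>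
    simp [WithTop.recTopCoe, EReal.coe_lt_top]

lemma exists_coe_le_evv {L : Type*} (v : L → WithTop ℤ) (x : L) :
    ∃ r : ℝ, (r : EReal) ≤ evv v x := by
  unfold evv
  induction v x using WithTop.recTopCoe with
  | top => exact ⟨0, le_top⟩
  | coe n => exact ⟨n, le_rfl⟩

variable {L : Type*} [DivisionRing L]

lemma NP_le_evv_coeff (v : L → WithTop ℤ) (f : L[X]) {i : ℕ} (hi : i ∈ f.support) :
    NP v f i ≤ evv v (f.coeff i) :=
  sSup_le fun _ ⟨_, _, hab, hy⟩ => hy ▸ hab i hi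

lemma evv_coeff_zero_le_NP_zero (v : L → WithTop ℤ) (f : L[X]) :
    evv v (f.coeff 0) ≤ NP v f 0 := by
  refine le_of_not_gt fun h => ?_
  obtain ⟨b, hNP, hb⟩ := EReal.lt_iff_exists_real_btwn.1 h
  choose r hr using fun i => exists_coe_le_evv v (f.coeff i)
  obtain ⟨A, hA⟩ := ((f.support.erase 0).image fun i => (b - r i) / i).exists_le
  -- a steep enough line through `(0, b)` passes below the whole Newton diagram
  have hline : ∀ i ∈ f.support, ((-A * i + b : ℝ) : EReal) ≤ evv v (f.coeff i) := by
    intro i hi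
    rcases eq_or_ne i 0 with rfl | hi0
    · simpa using hb.le
    · refine le_trans (EReal.coe_le_coe_iff.2 ?_) (hr i)
      have hipos : (0 : ℝ) < i := by positivity
      have := hA _ (Finset.mem_image_of_mem _ (Finset.mem_erase.2 ⟨hi0, hi⟩))
      rw [div_le_iff₀ hipos] at this
      linarith
  exact hNP.not_ge (le_sSup ⟨-A, b, hline, by simp⟩)

lemma valuation_coeff_zero_lt_of_NP_eq (v : AddValuation L (WithTop ℤ)) {f : L[X]} {d : ℕ}
    (hd : f.natDegree = d) {s : ℝ} (hs : 0 < s)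
    (hedge : ∀ x ∈ Set.Icc (0 : ℝ) d, NP v f x = ((s * (x - d) : ℝ) : EReal))
    {i : ℕ} (hi : 0 < i) : v (f.coeff 0) < v (f.coeff i) := by
  rw [← evv_lt_evv_iff]
  refine ((evv_coeff_zero_le_NP_zero v f).trans_eq (hedge 0 ⟨le_rfl, d.cast_nonneg⟩)).trans_lt ?_
  by_cases hsupp : i ∈ f.support
  · have hid : (i : ℝ) ≤ d := by exact_mod_cast hd ▸ le_natDegree_of_mem_supp i hsupp
    refine lt_of_lt_of_le ?_ ((hedge i ⟨i.cast_nonneg, hid⟩).symm.trans_le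
      (NP_le_evv_coeff v f hsupp))
    have : (0 : ℝ) < i := by exact_mod_cast hi
    exact EReal.coe_lt_coe_iff.2 (by nlinarith)
  · rw [notMem_support_iff.1 hsupp, evv, v.map_zero]
    exact EReal.coe_lt_top _

lemma AddValuation.one_le_inv_mul_of_lt (v : AddValuation L (WithTop ℤ)) {x y : L}
    (h : v x < v y) : 1 ≤ v (x⁻¹ * y) := by
  rw [v.map_mul, v.map_inv]
  obtain ⟨n, hn⟩ := WithTop.ne_top_iff_exists.1 h.ne_top
  rw [← hn] at h ⊢
  generalize v y = b at h ⊢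
  induction b using WithTop.recTopCoe with
  | top => simp
  | coe m =>
    rw [← WithTop.LinearOrderedAddCommGroup.coe_neg]
    norm_cast at h ⊢
    omega

end NewtonPolygon

section Lattice

variable {L M : Type*} [DivisionRing L] [AddCommGroup M] [Module L M]
  (v : AddValuation L (WithTop ℤ)) (e : ℕ → M) (d : ℕ)

def coordLattice (t : ℤ) : AddSubgroup M :=
  AddSubgroup.closure {m | ∃ i < d, ∃ a : L, (t : WithTop ℤ) ≤ v a ∧ a • e i = m}

variable {v e d}

lemma smul_mem_coordLattice {t : ℤ} {i : ℕ} (hi : i < d) {a : L}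
    (ha : (t : WithTop ℤ) ≤ v a) :
    a • e i ∈ coordLattice v e d t :=
  AddSubgroup.subset_closure ⟨i, hi, a, ha, rfl⟩

lemma coordLattice_antitone : Antitone (coordLattice v e d) :=
  fun _ _ hts => AddSubgroup.closure_mono fun _ ⟨i, hi, a, ha, hm⟩ =>
    ⟨i, hi, a, le_trans (by exact_mod_cast hts) ha, hm⟩

lemma smul_mem_coordLattice_of_mem {n t : ℤ} {c : L} (hc : (n : WithTop ℤ) ≤ v c) {m : M}
    (hm : m ∈ coordLattice v e d t) : c • m ∈ coordLattice v e d (n + t) := by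
  induction hm using AddSubgroup.closure_induction with
  | mem _ h =>
    obtain ⟨i, hi, a, ha, rfl⟩ := h
    rw [smul_smul]
    exact smul_mem_coordLattice hi (by rw [v.map_mul]; exact_mod_cast add_le_add hc ha)
  | zero => simp
  | add _ _ _ _ hx hy => simpa using add_mem hx hy
  | neg _ _ hx => simpa using neg_mem hx

lemma exists_mem_coordLattice {m : M} (hm : m ∈ Submodule.span L (e '' Set.Iio d)) :
    ∃ t : ℤ, m ∈ coordLattice v e d t := by
  induction hm using Submodule.span_induction with
  | mem _ h =>
    obtain ⟨i, hi, rfl⟩ := h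
    exact ⟨0, by simpa using smul_mem_coordLattice (v := v) (e := e) hi (a := 1) (by simp)⟩
  | zero => exact ⟨0, zero_mem _⟩
  | add _ _ _ _ hx hy =>
    obtain ⟨t, ht⟩ := hx
    obtain ⟨s, hs⟩ := hy
    exact ⟨min t s, add_mem (coordLattice_antitone (min_le_left t s) ht)
      (coordLattice_antitone (min_le_right t s) hs)⟩
  | smul c _ _ hx =>
    obtain ⟨t, ht⟩ := hx
    rcases eq_or_ne c 0 with rfl | hc
    · exact ⟨t, by simp⟩
    · obtain ⟨n, hn⟩ := WithTop.ne_top_iff_exists.1 ((v.top_iff).not.2 hc)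
      exact ⟨n + t, smul_mem_coordLattice_of_mem hn.le ht⟩

lemma exists_le_coordLattice {O : Subring L} (hO : ∀ x ∈ O, 0 ≤ v x)
    (hspan : Submodule.span L (e '' Set.Iio d) = ⊤) {Λ : Submodule O M} (hΛ : Λ.FG) :
    ∃ t : ℤ, Λ.toAddSubgroup ≤ coordLattice v e d t := by
  obtain ⟨S, rfl⟩ := hΛ
  have hgen : ∀ g : M, ∀ᶠ t in atBot, g ∈ coordLattice v e d t := fun g => by
    obtain ⟨t₀, ht₀⟩ :=
      exists_mem_coordLattice (v := v) (hspan ▸ Submodule.mem_top (x := g))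
    filter_upwards [eventually_le_atBot t₀] with t ht using coordLattice_antitone ht ht₀
  obtain ⟨t, ht⟩ := ((Finset.eventually_all S).2 fun g _ => hgen g).exists
  refine ⟨t, fun m hm => ?_⟩
  rw [Submodule.mem_toAddSubgroup] at hm
  induction hm using Submodule.span_induction with
  | mem g hg => exact ht g hg
  | zero => exact zero_mem _
  | add _ _ _ _ hx hy => exact add_mem hx hy
  | smul r _ _ hx =>
    have := smul_mem_coordLattice_of_mem (n := 0) (c := (r : L)) (by simpa using hO r r.2) hx
    rwa [zero_add] at this

lemma eventually_coe_add_nonneg (x : WithTop ℤ) :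
    ∀ᶠ t : ℤ in atTop, 0 ≤ (t : WithTop ℤ) + x := by
  induction x using WithTop.recTopCoe with
  | top => exact Eventually.of_forall fun _ => le_top
  | coe n =>
    filter_upwards [eventually_ge_atTop (-n)] with t ht
    rw [← WithTop.coe_add]
    exact WithTop.coe_nonneg.2 (by omega)

lemma exists_coordLattice_le {O : Subring L} (hO : ∀ x, 0 ≤ v x → x ∈ O) {Λ : Submodule O M}
    {ι : Type*} [Fintype ι] (b : Module.Basis ι L M) (hb : ∀ j, b j ∈ Λ) :
    ∃ t : ℤ, coordLattice v e d t ≤ Λ.toAddSubgroup := by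
  have hsmul : ∀ x : M, ∀ᶠ t : ℤ in atTop, ∀ a : L, (t : WithTop ℤ) ≤ v a → a • x ∈ Λ := by
    intro x
    filter_upwards [eventually_all.2 fun j => eventually_coe_add_nonneg (v (b.repr x j))]
      with t ht a ha
    rw [← b.sum_repr x, Finset.smul_sum]
    refine Λ.sum_mem fun j _ => ?_
    have hj : 0 ≤ v (a * b.repr x j) :=
      (ht j).trans (by rw [v.map_mul]; gcongr)
    rw [smul_smul]
    exact Λ.smul_mem ⟨_, hO _ hj⟩ (hb j)
  obtain ⟨t, ht⟩ := ((Finset.eventually_all (Finset.range d)).2 fun i _ => hsmul (e i)).exists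
  refine ⟨t, (AddSubgroup.closure_le _).2 ?_⟩
  rintro _ ⟨i, hi, a, ha, rfl⟩
  exact ht i (Finset.mem_range.2 hi) a ha

end Lattice

lemma AddSubgroup.pointwise_smul_mono {R A : Type*} [Monoid R] [AddGroup A] [DistribMulAction R A]
    (a : R) {S T : AddSubgroup A} (h : S ≤ T) : a • S ≤ a • T := by
  rw [← SetLike.coe_subset_coe, AddSubgroup.coe_pointwise_smul, AddSubgroup.coe_pointwise_smul]
  exact Set.smul_set_mono h

lemma exists_cyclic_vector {R N : Type*} [Ring R] [AddCommGroup N] [Module R N] {f : R}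
    (φ : N ≃ₗ[R] R ⧸ Submodule.span R {f}) :
    ∃ n₀ : N, f • n₀ = 0 ∧ ∀ n : N, ∃ p : R, p • n₀ = n := by
  refine ⟨φ.symm (Submodule.Quotient.mk 1), ?_, fun n => ?_⟩
  · rw [← map_smul, ← Submodule.Quotient.mk_smul, smul_eq_mul, mul_one,
      (Submodule.Quotient.mk_eq_zero _).2 (Submodule.mem_span_singleton_self f), map_zero]
  · obtain ⟨p, hp⟩ := Submodule.Quotient.mk_surjective _ (φ n)
    refine ⟨p, ?_⟩
    rw [← map_smul, ← Submodule.Quotient.mk_smul, smul_eq_mul, mul_one, hp, φ.symm_apply_apply]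

section CyclicModule

variable {L M : Type*} [DivisionRing L] [AddCommGroup M] [Module L[X] M] [Module L M]
  {e : ℕ → M} {d : ℕ}

lemma X_pow_smul_smul_comm (hcompat : ∀ (a : L) (m : M), a • m = (C a : L[X]) • m)
    (k : ℕ) (a : L) (m : M) : (X ^ k : L[X]) • a • m = a • (X ^ k : L[X]) • m := by
  rw [hcompat, hcompat, smul_smul, smul_smul, X_pow_mul]

lemma span_image_Iio_eq_top (hcompat : ∀ (a : L) (m : M), a • m = (C a : L[X]) • m)
    (he : ∀ i, e i = (X ^ i : L[X]) • e 0) {f : L[X]} (hf : f.Monic) (hd : f.natDegree = d)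
    (hf0 : f • e 0 = 0) (hgen : ∀ m : M, ∃ p : L[X], p • e 0 = m) :
    Submodule.span L (e '' Set.Iio d) = ⊤ := by
  set W := Submodule.span L (e '' Set.Iio d)
  -- `f • e 0 = 0` makes `e` satisfy a linear recurrence of order `d`
  have hpow : ∀ n, e n ∈ W := by
    intro n
    induction n using Nat.strong_induction_on with
    | _ n ih =>
      rcases lt_or_ge n d with hn | hn
      · exact Submodule.subset_span ⟨n, hn, rfl⟩
      obtain ⟨k, rfl⟩ := Nat.exists_eq_add_of_le' hn
      have hrec : e (k + d) = -∑ i ∈ Finset.range d, f.coeff i • e (k + i) := by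
        have h : (X ^ k * f) • e 0 = 0 := by rw [mul_smul, hf0, smul_zero]
        rw [hf.as_sum, hd, mul_add, Finset.mul_sum, add_smul, ← pow_add, Finset.sum_smul,
          ← he] at h
        rw [eq_neg_iff_add_eq_zero, ← h]
        congr 1
        refine Finset.sum_congr rfl fun i _ => ?_
        rw [← mul_assoc, X_pow_mul, mul_assoc, ← pow_add, mul_smul, ← he, hcompat]
      rw [hrec]
      refine neg_mem (Submodule.sum_mem _ fun i hi => Submodule.smul_mem _ _ (ih _ ?_))
      have := Finset.mem_range.1 hi
      omega
  refine eq_top_iff.2 fun m _ => ?_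
  obtain ⟨p, rfl⟩ := hgen m
  rw [p.as_sum_support_C_mul_X_pow, Finset.sum_smul]
  refine Submodule.sum_mem _ fun i _ => ?_
  rw [mul_smul, ← he, ← hcompat]
  exact Submodule.smul_mem _ _ (hpow i)

variable (v : AddValuation L (WithTop ℤ))

lemma exists_mem_coordLattice_one_X_smul_eq
    (hcompat : ∀ (a : L) (m : M), a • m = (C a : L[X]) • m)
    (he : ∀ i, e i = (X ^ i : L[X]) • e 0) {f : L[X]} (hd : f.natDegree = d)
    (hf : ∀ i, 0 < i → v (f.coeff 0) < v (f.coeff i)) (hf0 : f • e 0 = 0) :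
    ∃ u ∈ coordLattice v e d 1, (X : L[X]) • u = e 0 := by
  have hc0 : f.coeff 0 ≠ 0 := v.top_iff.not.1 (hf 1 one_pos).ne_top
  have hsplit : ∑ i ∈ Finset.range d, f.coeff (i + 1) • e (i + 1) = -(f.coeff 0 • e 0) := by
    rw [f.as_sum_range_C_mul_X_pow, hd, Finset.sum_smul, Finset.sum_range_succ'] at hf0
    simp only [mul_smul, ← he, ← hcompat, pow_zero, one_smul] at hf0
    exact eq_neg_of_add_eq_zero_left hf0
  refine ⟨∑ i ∈ Finset.range d, (-((f.coeff 0)⁻¹ * f.coeff (i + 1))) • e i,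
    AddSubgroup.sum_mem _ fun i hi => smul_mem_coordLattice (Finset.mem_range.1 hi) ?_, ?_⟩
  · rw [v.map_neg]
    exact_mod_cast v.one_le_inv_mul_of_lt (hf _ i.succ_pos)
  · calc (X : L[X]) • ∑ i ∈ Finset.range d, (-((f.coeff 0)⁻¹ * f.coeff (i + 1))) • e i
        = -((f.coeff 0)⁻¹ • ∑ i ∈ Finset.range d, f.coeff (i + 1) • e (i + 1)) := by
          simp only [Finset.smul_sum, ← Finset.sum_neg_distrib]
          refine Finset.sum_congr rfl fun i _ => ?_
          rw [← pow_one (X : L[X]), X_pow_smul_smul_comm hcompat, he i, he (i + 1), smul_smul,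
            ← pow_add, add_comm 1 i, neg_smul, mul_smul]
      _ = e 0 := by rw [hsplit, smul_neg, neg_neg, smul_smul, inv_mul_cancel₀ hc0, one_smul]

variable {v}

lemma coordLattice_le_X_smul (hcompat : ∀ (a : L) (m : M), a • m = (C a : L[X]) • m)
    (he : ∀ i, e i = (X ^ i : L[X]) • e 0) {u : M} (hu : u ∈ coordLattice v e d 1)
    (hXu : (X : L[X]) • u = e 0) (t : ℤ) :
    coordLattice v e d t ≤ (X : L[X]) • coordLattice v e d t := by
  refine (AddSubgroup.closure_le _).2 ?_
  rintro _ ⟨i, hi, a, ha, rfl⟩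
  rw [SetLike.mem_coe, AddSubgroup.mem_smul_pointwise_iff_exists]
  have hcomm : ∀ m : M, (X : L[X]) • a • m = a • (X : L[X]) • m := by
    simpa using X_pow_smul_smul_comm hcompat 1 a
  rcases i with _ | j
  · refine ⟨a • u, coordLattice_antitone (by omega) (smul_mem_coordLattice_of_mem ha hu), ?_⟩
    rw [hcomm, hXu]
  · refine ⟨a • e j, smul_mem_coordLattice (by omega) ha, ?_⟩
    rw [hcomm, he j, he (j + 1), smul_smul, pow_succ']

lemma coordLattice_le_X_pow_smul (hcompat : ∀ (a : L) (m : M), a • m = (C a : L[X]) • m)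
    (he : ∀ i, e i = (X ^ i : L[X]) • e 0) {u : M} (hu : u ∈ coordLattice v e d 1)
    (hXu : (X : L[X]) • u = e 0) (n : ℕ) (t : ℤ) :
    coordLattice v e d t ≤ (X ^ n : L[X]) • coordLattice v e d t := by
  induction n with
  | zero => rw [pow_zero, one_smul]
  | succ n ih =>
    calc coordLattice v e d t
        ≤ (X ^ n : L[X]) • (X : L[X]) • coordLattice v e d t :=
          ih.trans (AddSubgroup.pointwise_smul_mono _ (coordLattice_le_X_smul hcompat he hu hXu t))
      _ = (X ^ (n + 1) : L[X]) • coordLattice v e d t := by rw [smul_smul, pow_succ]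

lemma coordLattice_le_X_pow_smul_succ (hcompat : ∀ (a : L) (m : M), a • m = (C a : L[X]) • m)
    (he : ∀ i, e i = (X ^ i : L[X]) • e 0) {u : M} (hu : u ∈ coordLattice v e d 1)
    (hXu : (X : L[X]) • u = e 0) (t : ℤ) :
    coordLattice v e d t ≤ (X ^ d : L[X]) • coordLattice v e d (t + 1) := by
  refine (AddSubgroup.closure_le _).2 ?_
  rintro _ ⟨i, hi, a, ha, rfl⟩
  obtain ⟨u', hu', hXu'⟩ := (AddSubgroup.mem_smul_pointwise_iff_exists _ _ _).1
    (coordLattice_le_X_pow_smul hcompat he hu hXu (d - (i + 1)) (t + 1)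
      (smul_mem_coordLattice_of_mem ha hu))
  rw [SetLike.mem_coe, AddSubgroup.mem_smul_pointwise_iff_exists]
  refine ⟨u', hu', ?_⟩
  rw [← Nat.add_sub_cancel' (show i + 1 ≤ d by omega), pow_add, mul_smul, hXu',
    X_pow_smul_smul_comm hcompat, pow_succ, mul_smul, hXu, ← he]

lemma coordLattice_le_X_pow_smul_add (hcompat : ∀ (a : L) (m : M), a • m = (C a : L[X]) • m)
    (he : ∀ i, e i = (X ^ i : L[X]) • e 0) {u : M} (hu : u ∈ coordLattice v e d 1)
    (hXu : (X : L[X]) • u = e 0) (t : ℤ) (j : ℕ) {k : ℕ} (hk : d * j ≤ k) :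
    coordLattice v e d t ≤ (X ^ k : L[X]) • coordLattice v e d (t + j) := by
  induction j generalizing t k with
  | zero => simpa using coordLattice_le_X_pow_smul hcompat he hu hXu k t
  | succ j ih =>
    rw [mul_add, mul_one] at hk
    calc coordLattice v e d t
        ≤ (X ^ d : L[X]) • coordLattice v e d (t + 1) :=
          coordLattice_le_X_pow_smul_succ hcompat he hu hXu t
      _ ≤ (X ^ d : L[X]) • (X ^ (k - d) : L[X]) • coordLattice v e d (t + 1 + j) :=
          AddSubgroup.pointwise_smul_mono _ (ih (t + 1) (by omega))
      _ = (X ^ k : L[X]) • coordLattice v e d (t + (j + 1 : ℕ)) := by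
          rw [smul_smul, ← pow_add, Nat.add_sub_cancel' (by omega)]
          push_cast
          ring_nf

end CyclicModule

lemma apply_one_eq_zero_of_map_mul {L : Type*} [DivisionRing L] (v : L → WithTop ℤ)
    (hv0 : ∀ x : L, v x = ⊤ ↔ x = 0) (hmul : ∀ x y : L, v (x * y) = v x + v y) : v 1 = 0 := by
  obtain ⟨z, hz⟩ := WithTop.ne_top_iff_exists.1 ((hv0 1).not.2 one_ne_zero)
  have h := hmul 1 1
  rw [one_mul] at h
  rw [← hz] at h ⊢
  norm_cast at h ⊢
  omega

theorem stmt16_general {L M : Type*} [DivisionRing L]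
    [AddCommGroup M] [Module (Polynomial L) M] [Module L M]
    (hcompat : ∀ (a : L) (m : M), a • m = (Polynomial.C a : Polynomial L) • m)
    (v : L → WithTop ℤ)
    (hv0 : ∀ x : L, v x = ⊤ ↔ x = 0)
    (hadd : ∀ x y : L, min (v x) (v y) ≤ v (x + y))
    (hmul : ∀ x y : L, v (x * y) = v x + v y)
    (O : Subring L) (hO : (O : Set L) = {x : L | 0 ≤ v x})
    (σ : L) (hσ : v σ = 1)
    (f : Polynomial L) (hmonic : f.Monic) (d : ℕ) (hd : f.natDegree = d)
    (s : ℝ) (hs : 0 < s)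
    (hedge : ∀ x ∈ Set.Icc (0 : ℝ) (d : ℝ), NP v f x = ((s * (x - (d : ℝ)) : ℝ) : EReal))
    (hiso : Nonempty (M ≃ₗ[Polynomial L]
      (Polynomial L ⧸ Submodule.span (Polynomial L) {f})))
    (Λ : Submodule ↥O M) (hfg : Λ.FG)
    (hbasis : ∃ (n : ℕ) (b : Module.Basis (Fin n) L M), ∀ i, b i ∈ Λ) :
    ∃ k₀ : ℕ, ∀ k ≥ k₀,
      (fun m : M => σ⁻¹ • m) '' (Λ : Set M) ⊆
        (fun m : M => ((Polynomial.X : Polynomial L) ^ k) • m) '' (Λ : Set M) := by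
  let w := AddValuation.of v ((hv0 0).2 rfl) (apply_one_eq_zero_of_map_mul v hv0 hmul) hadd hmul
  have hmemO : ∀ x, x ∈ O ↔ 0 ≤ w x := fun x => Set.ext_iff.1 hO x
  obtain ⟨m₀, hfm₀, hgen⟩ := exists_cyclic_vector hiso.some
  set e : ℕ → M := fun i => (X ^ i : L[X]) • m₀
  have he : ∀ i, e i = (X ^ i : L[X]) • e 0 := by simp [e]
  have he0 : e 0 = m₀ := by simp [e]
  rw [← he0] at hfm₀ hgen
  obtain ⟨u, hu, hXu⟩ := exists_mem_coordLattice_one_X_smul_eq w hcompat he hd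
    (fun i hi => valuation_coeff_zero_lt_of_NP_eq w hd hs hedge hi) hfm₀
  obtain ⟨t₁, hΛ⟩ := exists_le_coordLattice (fun x => (hmemO x).1)
    (span_image_Iio_eq_top hcompat he hmonic hd hfm₀ hgen) hfg
  obtain ⟨_, b, hb⟩ := hbasis
  obtain ⟨t₂, hΓ⟩ := exists_coordLattice_le (v := w) (e := e) (d := d) (fun x => (hmemO x).2) b hb
  refine ⟨d * (t₂ - t₁ + 1).toNat, fun k hk => ?_⟩
  rintro _ ⟨m, hm, rfl⟩
  have hσm : σ⁻¹ • m ∈ coordLattice w e d (-1 + t₁) :=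
    smul_mem_coordLattice_of_mem (by rw [w.map_inv]; simp [w, hσ]) (hΛ hm)
  obtain ⟨m', hm', hXm'⟩ := (AddSubgroup.mem_smul_pointwise_iff_exists _ _ _).1
    (coordLattice_le_X_pow_smul_add hcompat he hu hXu _ _ hk hσm)
  exact ⟨m', hΓ (coordLattice_antitone (by omega) hm'), hXm'⟩

/-- Let `f` be monic with a single-edge Newton polygon of positive slope,
`M = L[t]/L[t]f`, and `Λ` an `O`-lattice in `M`.  Then there exists `k₀ ≥ 0` such
that `tᵏΛ ⊇ σ⁻¹Λ` for all `k ≥ k₀`. -/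
theorem stmt16 {L M : Type*} [DivisionRing L]
    [AddCommGroup M] [Module (Polynomial L) M] [Module L M]
    (hcompat : ∀ (a : L) (m : M), a • m = (Polynomial.C a : Polynomial L) • m)
    (v : L → WithTop ℤ)
    (hv0 : ∀ x : L, v x = ⊤ ↔ x = 0)
    (hadd : ∀ x y : L, min (v x) (v y) ≤ v (x + y))
    (hmul : ∀ x y : L, v (x * y) = v x + v y)
    (hcomplete : ∀ x : ℕ → L,
      (∀ M' : ℤ, ∃ N : ℕ, ∀ n ≥ N, (M' : WithTop ℤ) ≤ v (x n)) →
      ∃ t : L, ∀ M' : ℤ, ∃ N : ℕ, ∀ n ≥ N,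
        (M' : WithTop ℤ) ≤ v (t - ∑ i ∈ Finset.range n, x i))
    (O : Subring L) (hO : (O : Set L) = {x : L | 0 ≤ v x})
    (σ : L) (hσ : v σ = 1)
    (f : Polynomial L) (hmonic : f.Monic) (d : ℕ) (hd : f.natDegree = d) (hd0 : 0 < d)
    (s : ℝ) (hs : 0 < s)
    (hedge : ∀ x ∈ Set.Icc (0 : ℝ) (d : ℝ), NP v f x = ((s * (x - (d : ℝ)) : ℝ) : EReal))
    (hiso : Nonempty (M ≃ₗ[Polynomial L]
      (Polynomial L ⧸ Submodule.span (Polynomial L) {f})))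
    (Λ : Submodule ↥O M) (hfg : Λ.FG)
    (hbasis : ∃ (n : ℕ) (b : Module.Basis (Fin n) L M), ∀ i, b i ∈ Λ) :
    ∃ k₀ : ℕ, ∀ k ≥ k₀,
      (fun m : M => σ⁻¹ • m) '' (Λ : Set M) ⊆
        (fun m : M => ((Polynomial.X : Polynomial L) ^ k) • m) '' (Λ : Set M) :=
  stmt16_general hcompat v hv0 hadd hmul O hO σ hσ f hmonic d hd s hs hedge hiso Λ hfg hbasis
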